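/- arXiv:2308.14335 — 4 statements merged into one kernel-verified Lean document; each statement's English description precedes it below -/
import Mathlib

section
/- Suppose f minimizes over H the functional h ↦ (1/n)Σ_{i=1}^n (ℓ_i(h) − Y_i)² + λ‖h‖² and g minimizes over H the functional h ↦ (1/n)Σ_{i=1}^n (ℓ̃_i(h) − Y_i)² + λ‖h‖². Then ‖f − g‖² ≤ (1/λ)·[ (1/n)Σ_{i=1}^n ( ℓ̃_i(f−g)·ℓ̃_i(f) − ℓ_i(f−g)·ℓ_i(f) ) + (1/n)Σ_{i=1}^n Y_i·( ℓ_i(f−g) − ℓ̃_i(f−g) ) ]. -/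
open scoped BigOperators

/-! The ridge risk is a quadratic polynomial along every line `f + t • v`, so its minimizer `f`
satisfies the first-order condition `c ∑ (ℓ_i f − Y_i) ℓ_i v + λ ⟪f, v⟫ = 0` for every `v`.
Subtracting the conditions for `f` and `g` at `v = f − g` and writing `ℓ̃_i f = ℓ̃_i g + ℓ̃_i v`
turns the claimed bound, multiplied by `λ`, into an identity up to the term `c ∑ ℓ̃_i(f − g)² ≥ 0`. -/

section RidgeRisk

variable {ι H : Type*} [Fintype ι] [NormedAddCommGroup H] [InnerProductSpace ℝ H]
  (c lam : ℝ) (Y : ι → ℝ) (l : ι → H →L[ℝ] ℝ)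

def ridgeRisk (h : H) : ℝ :=
  c * ∑ i, (l i h - Y i) ^ 2 + lam * ‖h‖ ^ 2

/-- Half the directional derivative of `ridgeRisk` at `f` in direction `v`. -/
def ridgeRiskGradient (f v : H) : ℝ :=
  c * ∑ i, (l i f - Y i) * l i v + lam * inner ℝ f v

theorem ridgeRisk_add_smul (f v : H) (t : ℝ) :
    ridgeRisk c lam Y l (f + t • v) =
      ridgeRisk c lam Y l f + 2 * ridgeRiskGradient c lam Y l f v * t +
        ridgeRisk c lam 0 l v * t ^ 2 := by
  have hsum : ∀ i, (l i (f + t • v) - Y i) ^ 2 =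
      (l i f - Y i) ^ 2 + 2 * t * ((l i f - Y i) * l i v) + t ^ 2 * l i v ^ 2 := by
    intro i
    simp only [map_add, map_smul, smul_eq_mul]
    ring
  have hnorm : ‖f + t • v‖ ^ 2 = ‖f‖ ^ 2 + 2 * t * inner ℝ f v + t ^ 2 * ‖v‖ ^ 2 := by
    rw [norm_add_sq_real, real_inner_smul_right, norm_smul, Real.norm_eq_abs, mul_pow, sq_abs]
    ring
  simp only [ridgeRisk, ridgeRiskGradient, hsum, hnorm, Finset.sum_add_distrib, ← Finset.mul_sum,
    Pi.zero_apply, sub_zero]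
  ring

theorem ridgeRiskGradient_eq_zero_of_forall_le {f : H}
    (hf : ∀ h, ridgeRisk c lam Y l f ≤ ridgeRisk c lam Y l h) (v : H) :
    ridgeRiskGradient c lam Y l f v = 0 := by
  have hquad : ∀ t : ℝ,
      0 ≤ ridgeRisk c lam 0 l v * (t * t) + 2 * ridgeRiskGradient c lam Y l f v * t + 0 := by
    intro t
    have := hf (f + t • v)
    rw [ridgeRisk_add_smul] at this
    nlinarith
  have := discrim_le_zero hquad
  rw [discrim] at this
  nlinarith [sq_nonneg (ridgeRiskGradient c lam Y l f v)]

theorem ridgeRisk_stability_identity (lt : ι → H →L[ℝ] ℝ) {f g : H}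
    (hf : ridgeRiskGradient c lam Y l f (f - g) = 0)
    (hg : ridgeRiskGradient c lam Y lt g (f - g) = 0) :
    lam * ‖f - g‖ ^ 2 + c * ∑ i, lt i (f - g) ^ 2 =
      c * ∑ i, (lt i (f - g) * lt i f - l i (f - g) * l i f) +
        c * ∑ i, Y i * (l i (f - g) - lt i (f - g)) := by
  have hnorm : ‖f - g‖ ^ 2 = inner ℝ f (f - g) - inner ℝ g (f - g) := by
    rw [← real_inner_self_eq_norm_sq, inner_sub_left]
  have hsum : ∑ i, (lt i (f - g) * lt i f - l i (f - g) * l i f) +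
        ∑ i, Y i * (l i (f - g) - lt i (f - g)) =
      ∑ i, (lt i g - Y i) * lt i (f - g) - ∑ i, (l i f - Y i) * l i (f - g) +
        ∑ i, lt i (f - g) ^ 2 := by
    simp only [← Finset.sum_add_distrib, ← Finset.sum_sub_distrib]
    refine Finset.sum_congr rfl fun i _ => ?_
    simp only [map_sub]
    ring
  unfold ridgeRiskGradient at hf hg
  linear_combination lam * hnorm + hf - hg - c * hsum

end RidgeRisk

theorem statement4_general {H : Type*} [NormedAddCommGroup H] [InnerProductSpace ℝ H]
    (n : ℕ) (lam : ℝ) (hlam : 0 < lam)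
    (Y : Fin n → ℝ) (l lt : Fin n → H →L[ℝ] ℝ) (f g : H)
    (hf : ∀ h : H,
      (1 / (n : ℝ)) * ∑ i, (l i f - Y i) ^ 2 + lam * ‖f‖ ^ 2 ≤
        (1 / (n : ℝ)) * ∑ i, (l i h - Y i) ^ 2 + lam * ‖h‖ ^ 2)
    (hg : ∀ h : H,
      (1 / (n : ℝ)) * ∑ i, (lt i g - Y i) ^ 2 + lam * ‖g‖ ^ 2 ≤
        (1 / (n : ℝ)) * ∑ i, (lt i h - Y i) ^ 2 + lam * ‖h‖ ^ 2) :
    ‖f - g‖ ^ 2 ≤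
      (1 / lam) *
        ((1 / (n : ℝ)) * ∑ i, (lt i (f - g) * lt i f - l i (f - g) * l i f) +
          (1 / (n : ℝ)) * ∑ i, Y i * (l i (f - g) - lt i (f - g))) := by
  have hidentity := ridgeRisk_stability_identity _ lam Y l lt
    (ridgeRiskGradient_eq_zero_of_forall_le _ _ _ _ hf (f - g))
    (ridgeRiskGradient_eq_zero_of_forall_le _ _ _ _ hg (f - g))
  have hsq : 0 ≤ (1 / (n : ℝ)) * ∑ i, lt i (f - g) ^ 2 := by positivity
  rw [one_div lam, ← div_eq_inv_mul, le_div_iff₀ hlam]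
  linarith

/-- Let `H` be a real Hilbert space, `ℓ_i, ℓ̃_i : H → ℝ` continuous linear functionals,
`Y_i ∈ ℝ`, `λ > 0`.  If `f` minimizes `h ↦ (1/n)∑ (ℓ_i(h) − Y_i)² + λ‖h‖²` and `g` minimizes
`h ↦ (1/n)∑ (ℓ̃_i(h) − Y_i)² + λ‖h‖²`, then
`‖f − g‖² ≤ (1/λ)[(1/n)∑ (ℓ̃_i(f−g)ℓ̃_i(f) − ℓ_i(f−g)ℓ_i(f)) + (1/n)∑ Y_i(ℓ_i(f−g) − ℓ̃_i(f−g))]`. -/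
theorem statement4 {H : Type*} [NormedAddCommGroup H] [InnerProductSpace ℝ H]
    [CompleteSpace H] (n : ℕ) (hn : 1 ≤ n) (lam : ℝ) (hlam : 0 < lam)
    (Y : Fin n → ℝ) (l lt : Fin n → H →L[ℝ] ℝ) (f g : H)
    (hf : ∀ h : H,
      (1 / (n : ℝ)) * ∑ i, (l i f - Y i) ^ 2 + lam * ‖f‖ ^ 2 ≤
        (1 / (n : ℝ)) * ∑ i, (l i h - Y i) ^ 2 + lam * ‖h‖ ^ 2)
    (hg : ∀ h : H,
      (1 / (n : ℝ)) * ∑ i, (lt i g - Y i) ^ 2 + lam * ‖g‖ ^ 2 ≤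
        (1 / (n : ℝ)) * ∑ i, (lt i h - Y i) ^ 2 + lam * ‖h‖ ^ 2) :
    ‖f - g‖ ^ 2 ≤
      (1 / lam) *
        ((1 / (n : ℝ)) * ∑ i, (lt i (f - g) * lt i f - l i (f - g) * l i f) +
          (1 / (n : ℝ)) * ∑ i, Y i * (l i (f - g) - lt i (f - g))) :=
  statement4_general n lam hlam Y l lt f g hf hg
end

section
/- Let H be a real separable Hilbert space, B > 0, and let ξ_1, ξ_2, … be i.i.d. Bochner-integrable H-valued random elements with E[ξ_j] = 0 and ‖ξ_j‖_H ≤ B almost surely. Then for every s > 0 there exists a constant c, depending only on s and B, such that for every N ≥ 1, E[ ‖ (1/N) Σ_{j=1}^N ξ_j ‖_H^s ] ≤ c N^{−s/2}. -/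
/-!
Write `S_N = ξ_0 + ⋯ + ξ_{N-1}`. The even moments satisfy `E‖S_N‖^{2m} ≤ C_m N^m`
(`C_m = momentConst B m`), by induction on `m` and then on `N`: expanding
`‖S_N + ξ_N‖^{2(m+1)} = (‖S_N‖² + 2⟪S_N, ξ_N⟫ + ‖ξ_N‖²)^{m+1}` binomially, the term linear in
`⟪S_N, ξ_N⟫` has mean zero because `ξ_N` is centred and independent of `S_N`, and every term
other than `‖S_N‖^{2(m+1)}` is bounded by a constant times `1 + ‖S_N‖^{2m}`, whose mean is
`O(N^m)`. For arbitrary `s > 0`, apply `y^s ≤ 1 + y^{2m}` (`2m ≥ s`) to `y = ‖S_N‖ / √N`.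
-/

open MeasureTheory ProbabilityTheory Finset
open scoped RealInnerProductSpace

theorem sq_add_pow_succ_le {x r b : ℝ} (hx : 0 ≤ x) (hr : |r| ≤ b * (x + 1)) (n : ℕ) :
    (x ^ 2 + r) ^ (n + 1) ≤
      x ^ (2 * (n + 1)) + (n + 1) * x ^ (2 * n) * r + (1 + b) ^ (n + 1) * (x + 1) ^ (2 * n) := by
  have hy : 1 ≤ x + 1 := by linarith
  have hb : 0 ≤ b := nonneg_of_mul_nonneg_left ((abs_nonneg r).trans hr) (by linarith)
  set f : ℕ → ℝ := fun k ↦ r ^ k * (x ^ 2) ^ (n + 1 - k) * (n + 1).choose k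
  set g : ℕ → ℝ := fun k ↦ b ^ k * (x + 1) ^ (2 * n) * (n + 1).choose k
  have hf : (x ^ 2 + r) ^ (n + 1) = ∑ k ∈ range n, f (k + 2) + f 1 + f 0 := by
    rw [add_comm, add_pow, sum_range_succ', sum_range_succ' _ n]
  have hg : (1 + b) ^ (n + 1) * (x + 1) ^ (2 * n) = ∑ k ∈ range n, g (k + 2) + g 1 + g 0 := by
    rw [add_comm, add_pow, sum_mul, sum_range_succ', sum_range_succ' _ n]
    simp only [g, one_pow, mul_one, mul_right_comm]
  have hfg : ∀ k < n, f (k + 2) ≤ g (k + 2) := fun k hk ↦ by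
    have hpow : (x + 1) ^ (k + 2) * ((x + 1) ^ 2) ^ (n - 1 - k) ≤ (x + 1) ^ (2 * n) := by
      rw [← pow_mul, ← pow_add]; exact pow_le_pow_right₀ hy (by omega)
    calc f (k + 2) ≤ |r| ^ (k + 2) * (x ^ 2) ^ (n - 1 - k) * (n + 1).choose (k + 2) := by
          simp only [f, show n + 1 - (k + 2) = n - 1 - k by omega]
          gcongr ?_ * _ * _
          exact (le_abs_self _).trans (abs_pow r _).le
      _ ≤ (b * (x + 1)) ^ (k + 2) * ((x + 1) ^ 2) ^ (n - 1 - k) * (n + 1).choose (k + 2) := by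
          gcongr; linarith
      _ = b ^ (k + 2) * ((x + 1) ^ (k + 2) * ((x + 1) ^ 2) ^ (n - 1 - k)) *
            (n + 1).choose (k + 2) := by rw [mul_pow]; ring
      _ ≤ g (k + 2) := by simp only [g]; gcongr
  have htail := sum_le_sum fun k hk ↦ hfg k (mem_range.mp hk)
  have hg01 : 0 ≤ g 1 + g 0 := by simp only [g]; positivity
  have hf0 : f 0 = x ^ (2 * (n + 1)) := by simp [f, ← pow_mul]
  have hf1 : f 1 = (n + 1) * x ^ (2 * n) * r := by simp [f, ← pow_mul]; ring
  rw [hf, hg]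
  linarith

def stepConst (B : ℝ) (n : ℕ) : ℝ := 4 ^ n * (((1 + B) ^ 2) ^ (n + 1) + (n + 1) * B ^ 2)

def momentConst (B : ℝ) : ℕ → ℝ
  | 0 => 1
  | n + 1 => stepConst B n * (1 + momentConst B n)

theorem stepConst_nonneg (B : ℝ) (n : ℕ) : 0 ≤ stepConst B n := by
  rw [stepConst]; positivity

theorem momentConst_nonneg (B : ℝ) (m : ℕ) : 0 ≤ momentConst B m := by
  induction m with
  | zero => exact zero_le_one
  | succ n ih => rw [momentConst]; have := stepConst_nonneg B n; positivity

theorem norm_add_pow_le {H : Type*} [NormedAddCommGroup H] [InnerProductSpace ℝ H]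
    {u v : H} {B : ℝ} (hv : ‖v‖ ≤ B) (n : ℕ) :
    ‖u + v‖ ^ (2 * (n + 1)) ≤ ‖u‖ ^ (2 * (n + 1)) + 2 * (n + 1) * ⟪‖u‖ ^ (2 * n) • u, v⟫
      + stepConst B n * (1 + ‖u‖ ^ (2 * n)) := by
  set x := ‖u‖
  have hx : 0 ≤ x := norm_nonneg u
  have hB : 0 ≤ B := (norm_nonneg v).trans hv
  have hr : |2 * ⟪u, v⟫ + ‖v‖ ^ 2| ≤ ((1 + B) ^ 2 - 1) * (x + 1) := by
    have hi : |⟪u, v⟫| ≤ x * B := (abs_real_inner_le_norm u v).trans (by gcongr)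
    have hv2 : ‖v‖ ^ 2 ≤ B ^ 2 := by gcongr
    calc |2 * ⟪u, v⟫ + ‖v‖ ^ 2| ≤ 2 * |⟪u, v⟫| + ‖v‖ ^ 2 := by
          refine (abs_add_le _ _).trans ?_
          rw [abs_mul, abs_two, abs_of_nonneg (sq_nonneg ‖v‖)]
      _ ≤ ((1 + B) ^ 2 - 1) * (x + 1) := by nlinarith
  have hone_add : (x + 1) ^ (2 * n) ≤ 4 ^ n * (1 + x ^ (2 * n)) := calc
    (x + 1) ^ (2 * n) ≤ 2 ^ (2 * n - 1) * (x ^ (2 * n) + 1 ^ (2 * n)) := add_pow_le hx zero_le_one _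
    _ ≤ 2 ^ (2 * n) * (x ^ (2 * n) + 1) := by
        rw [one_pow]; gcongr <;> norm_num
    _ = 4 ^ n * (1 + x ^ (2 * n)) := by rw [pow_mul]; ring
  have hx2n : x ^ (2 * n) ≤ (x + 1) ^ (2 * n) := by gcongr; linarith
  calc ‖u + v‖ ^ (2 * (n + 1)) = (x ^ 2 + (2 * ⟪u, v⟫ + ‖v‖ ^ 2)) ^ (n + 1) := by
        rw [pow_mul, norm_add_sq_real]; ring
    _ ≤ x ^ (2 * (n + 1)) + (n + 1) * x ^ (2 * n) * (2 * ⟪u, v⟫ + ‖v‖ ^ 2)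
        + (1 + ((1 + B) ^ 2 - 1)) ^ (n + 1) * (x + 1) ^ (2 * n) := sq_add_pow_succ_le hx hr n
    _ = x ^ (2 * (n + 1)) + 2 * (n + 1) * ⟪x ^ (2 * n) • u, v⟫
        + ((n + 1) * x ^ (2 * n) * ‖v‖ ^ 2 + ((1 + B) ^ 2) ^ (n + 1) * (x + 1) ^ (2 * n)) := by
        rw [add_sub_cancel, real_inner_smul_left]; ring
    _ ≤ x ^ (2 * (n + 1)) + 2 * (n + 1) * ⟪x ^ (2 * n) • u, v⟫
        + (((1 + B) ^ 2) ^ (n + 1) + (n + 1) * B ^ 2) * (x + 1) ^ (2 * n) := by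
        have : x ^ (2 * n) * ‖v‖ ^ 2 ≤ (x + 1) ^ (2 * n) * B ^ 2 := by gcongr
        nlinarith
    _ ≤ x ^ (2 * (n + 1)) + 2 * (n + 1) * ⟪x ^ (2 * n) • u, v⟫
        + (((1 + B) ^ 2) ^ (n + 1) + (n + 1) * B ^ 2) * (4 ^ n * (1 + x ^ (2 * n))) := by
        gcongr
    _ = _ := by rw [stepConst]; ring

theorem Real.rpow_le_one_add_rpow {a s t : ℝ} (ha : 0 ≤ a) (hs : 0 ≤ s) (hst : s ≤ t) :
    a ^ s ≤ 1 + a ^ t := by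
  rcases le_or_gt a 1 with h | h
  · linarith [Real.rpow_le_one ha h hs, Real.rpow_nonneg ha t]
  · linarith [Real.rpow_le_rpow_of_exponent_le h.le hst]

theorem div_rpow_le_of_le_two_mul {x t s : ℝ} {m : ℕ} (hx : 0 ≤ x) (ht : 0 < t) (hs : 0 ≤ s)
    (hsm : s ≤ 2 * m) : (x / t) ^ s ≤ (1 + x ^ (2 * m) / t ^ m) * t ^ (-(s / 2)) := by
  have hsqrt : 0 < √t := Real.sqrt_pos.mpr ht
  have hts : √t ^ s = t ^ (s / 2) := by
    rw [Real.sqrt_eq_rpow, ← Real.rpow_mul ht.le]; ring_nf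
  calc (x / t) ^ s = (x / √t) ^ s / √t ^ s := by
        rw [← Real.div_rpow (by positivity) hsqrt.le, div_div, Real.mul_self_sqrt ht.le]
    _ ≤ (1 + (x / √t) ^ (2 * m : ℝ)) / √t ^ s := by
        gcongr; exact Real.rpow_le_one_add_rpow (by positivity) hs hsm
    _ = (1 + x ^ (2 * m) / t ^ m) * t ^ (-(s / 2)) := by
        rw [hts, Real.rpow_neg ht.le, div_eq_mul_inv,
          show (2 * m : ℝ) = (2 * m : ℕ) by push_cast; ring,
          Real.rpow_natCast, div_pow, pow_mul, pow_mul, Real.sq_sqrt ht.le]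

theorem ProbabilityTheory.IndepFun.integral_inner {H Ω : Type*} [NormedAddCommGroup H]
    [InnerProductSpace ℝ H] [CompleteSpace H] [MeasurableSpace H] [BorelSpace H]
    [MeasurableSpace Ω] {P : Measure Ω} {X Y : Ω → H} (hXY : IndepFun X Y P)
    (hX : Integrable X P) (hY : Integrable Y P) :
    ∫ ω, ⟪X ω, Y ω⟫ ∂P = ⟪∫ ω, X ω ∂P, ∫ ω, Y ω ∂P⟫ :=
  hXY.integral_bilin hX hY (innerSL ℝ)

section PartialSums

variable {H Ω : Type*} [NormedAddCommGroup H] [MeasurableSpace Ω] {P : Measure Ω}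
  {ξ : ℕ → Ω → H} {B : ℝ}

theorem ae_norm_sum_le (hbound : ∀ j, ∀ᵐ ω ∂P, ‖ξ j ω‖ ≤ B) (N : ℕ) :
    ∀ᵐ ω ∂P, ‖∑ j ∈ range N, ξ j ω‖ ≤ N * B := by
  filter_upwards [ae_all_iff.mpr hbound] with ω hω
  calc ‖∑ j ∈ range N, ξ j ω‖ ≤ ∑ j ∈ range N, ‖ξ j ω‖ := norm_sum_le _ _
    _ ≤ N * B := by simpa using sum_le_sum fun j (_ : j ∈ range N) ↦ hω j

variable [MeasurableSpace H] [BorelSpace H] [SecondCountableTopology H] [IsFiniteMeasure P]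

theorem integrable_norm_sum_pow (hmeas : ∀ j, Measurable (ξ j))
    (hbound : ∀ j, ∀ᵐ ω ∂P, ‖ξ j ω‖ ≤ B) (N p : ℕ) :
    Integrable (fun ω ↦ ‖∑ j ∈ range N, ξ j ω‖ ^ p) P := by
  refine .of_bound (by fun_prop) ((N * B) ^ p) ?_
  filter_upwards [ae_norm_sum_le hbound N] with ω hω
  rw [norm_pow, norm_norm]
  gcongr

variable [InnerProductSpace ℝ H] [CompleteSpace H] [IsProbabilityMeasure P]

theorem integral_norm_sum_succ_pow_le (hmeas : ∀ j, Measurable (ξ j)) (hindep : iIndepFun ξ P)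
    (hmean : ∀ j, ∫ ω, ξ j ω ∂P = 0) (hbound : ∀ j, ∀ᵐ ω ∂P, ‖ξ j ω‖ ≤ B) (n N : ℕ) :
    ∫ ω, ‖∑ j ∈ range (N + 1), ξ j ω‖ ^ (2 * (n + 1)) ∂P ≤
      ∫ ω, ‖∑ j ∈ range N, ξ j ω‖ ^ (2 * (n + 1)) ∂P
        + stepConst B n * (1 + ∫ ω, ‖∑ j ∈ range N, ξ j ω‖ ^ (2 * n) ∂P) := by
  set S : Ω → H := fun ω ↦ ∑ j ∈ range N, ξ j ω
  set V : Ω → H := fun ω ↦ ‖S ω‖ ^ (2 * n) • S ω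
  have hV : Integrable V P := by
    refine (integrable_norm_sum_pow hmeas hbound N (2 * n + 1)).mono' (by fun_prop) ?_
    refine .of_forall fun ω ↦ ?_
    simp only [V, norm_smul, norm_pow, norm_norm, pow_succ]
    rfl
  have hξ : Integrable (ξ N) P := .of_bound (hmeas N).aestronglyMeasurable B (hbound N)
  have hVξ : IndepFun V (ξ N) P := by
    have := hindep.indepFun_finsetSum_of_notMem hmeas (notMem_range_self (n := N))
    convert this.comp (φ := fun u ↦ ‖u‖ ^ (2 * n) • u) (by fun_prop) measurable_id
    · ext ω; simp [V, S, Finset.sum_apply]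
    · rfl
  have hcross : ∫ ω, ⟪V ω, ξ N ω⟫ ∂P = 0 := by
    rw [hVξ.integral_inner hV hξ, hmean, inner_zero_right]
  have hpt : ∀ᵐ ω ∂P, ‖∑ j ∈ range (N + 1), ξ j ω‖ ^ (2 * (n + 1)) ≤
      ‖S ω‖ ^ (2 * (n + 1)) + 2 * (n + 1) * ⟪V ω, ξ N ω⟫
        + stepConst B n * (1 + ‖S ω‖ ^ (2 * n)) := by
    filter_upwards [hbound N] with ω hω
    rw [sum_range_succ]
    exact norm_add_pow_le hω n
  have hS : ∀ p, Integrable (fun ω ↦ ‖S ω‖ ^ p) P := integrable_norm_sum_pow hmeas hbound N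
  have hinner : Integrable (fun ω ↦ ⟪V ω, ξ N ω⟫) P := hVξ.integrable_bilin hV hξ (innerSL ℝ)
  have hlead : Integrable (fun ω ↦ ‖S ω‖ ^ (2 * (n + 1)) + 2 * (n + 1) * ⟪V ω, ξ N ω⟫) P :=
    (hS _).add (hinner.const_mul _)
  have htail : Integrable (fun ω ↦ stepConst B n * (1 + ‖S ω‖ ^ (2 * n))) P :=
    ((integrable_const 1).add (hS _)).const_mul _
  calc _ ≤ ∫ ω, (‖S ω‖ ^ (2 * (n + 1)) + 2 * (n + 1) * ⟪V ω, ξ N ω⟫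
          + stepConst B n * (1 + ‖S ω‖ ^ (2 * n))) ∂P :=
        integral_mono_ae (integrable_norm_sum_pow hmeas hbound (N + 1) _) (hlead.add htail) hpt
    _ = _ := by
        rw [integral_add hlead htail, integral_add (hS _) (hinner.const_mul _), integral_const_mul,
          integral_const_mul, integral_add (integrable_const 1) (hS _), hcross]
        simp [S]

theorem integral_norm_sum_pow_le (hmeas : ∀ j, Measurable (ξ j)) (hindep : iIndepFun ξ P)
    (hmean : ∀ j, ∫ ω, ξ j ω ∂P = 0) (hbound : ∀ j, ∀ᵐ ω ∂P, ‖ξ j ω‖ ≤ B) (m N : ℕ) :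
    ∫ ω, ‖∑ j ∈ range N, ξ j ω‖ ^ (2 * m) ∂P ≤ momentConst B m * N ^ m := by
  induction m generalizing N with
  | zero => simp [momentConst]
  | succ n ih =>
    induction N with
    | zero => simp
    | succ N ihN =>
      have hK := stepConst_nonneg B n
      have hC := momentConst_nonneg B n
      have hN : (N : ℝ) ^ n ≤ (N + 1) ^ n := by gcongr; linarith
      calc _ ≤ momentConst B (n + 1) * N ^ (n + 1)
              + stepConst B n * (1 + momentConst B n * N ^ n) :=
            (integral_norm_sum_succ_pow_le hmeas hindep hmean hbound n N).trans
              (by gcongr; exact ih N)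
        _ ≤ momentConst B (n + 1) * (N ^ (n + 1) + (N + 1) ^ n) := by
            rw [momentConst]
            have : 1 + momentConst B n * N ^ n ≤ (1 + momentConst B n) * (N + 1) ^ n := by
              nlinarith [one_le_pow₀ (show (1 : ℝ) ≤ N + 1 by linarith) (n := n)]
            nlinarith
        _ ≤ momentConst B (n + 1) * ((N + 1 : ℕ) : ℝ) ^ (n + 1) := by
            gcongr
            · exact momentConst_nonneg B (n + 1)
            · push_cast; rw [pow_succ _ n, pow_succ _ n]; nlinarith

end PartialSums

theorem statement6_general (s B : ℝ) (hs : 0 < s) :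
    ∃ c : ℝ, 0 < c ∧
      ∀ (H : Type*) [NormedAddCommGroup H] [InnerProductSpace ℝ H] [CompleteSpace H]
        [TopologicalSpace.SeparableSpace H] [MeasurableSpace H] [BorelSpace H]
        (Θ : Type*) [MeasurableSpace Θ] (P : Measure Θ) [IsProbabilityMeasure P]
        (ξ : ℕ → Θ → H),
        (∀ j, Measurable (ξ j)) →
        iIndepFun ξ P →
        (∀ j, Measure.map (ξ j) P = Measure.map (ξ 0) P) →
        (∀ j, Integrable (ξ j) P) →
        (∀ j, ∫ ω, ξ j ω ∂P = 0) →
        (∀ j, ∀ᵐ ω ∂P, ‖ξ j ω‖ ≤ B) →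
        ∀ N : ℕ, 1 ≤ N →
          ∫ ω, ‖(N : ℝ)⁻¹ • ∑ j ∈ Finset.range N, ξ j ω‖ ^ s ∂P ≤
            c * ((N : ℝ) ^ (-(s / 2)) : ℝ) := by
  set m := ⌈s / 2⌉₊
  have hsm : s ≤ 2 * m := by linarith [Nat.le_ceil (s / 2)]
  refine ⟨1 + momentConst B m, by linarith [momentConst_nonneg B m], ?_⟩
  intro H _ _ _ _ _ _ Θ _ P _ ξ hmeas hindep _ _ hmean hbound N hN
  set S : Θ → H := fun ω ↦ ∑ j ∈ range N, ξ j ω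
  have hN : (0 : ℝ) < N := by exact_mod_cast hN
  have hpt : ∀ ω, ‖(N : ℝ)⁻¹ • S ω‖ ^ s ≤ (1 + ‖S ω‖ ^ (2 * m) / N ^ m) * N ^ (-(s / 2)) := by
    intro ω
    rw [norm_smul, norm_inv, Real.norm_natCast, inv_mul_eq_div]
    exact div_rpow_le_of_le_two_mul (norm_nonneg _) hN hs.le hsm
  have hmoment := integral_norm_sum_pow_le hmeas hindep hmean hbound m N
  calc ∫ ω, ‖(N : ℝ)⁻¹ • S ω‖ ^ s ∂P
      ≤ ∫ ω, (1 + ‖S ω‖ ^ (2 * m) / N ^ m) * N ^ (-(s / 2)) ∂P :=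
        integral_mono_of_nonneg (.of_forall fun _ ↦ by positivity)
          (((integrable_const 1).add
            ((integrable_norm_sum_pow hmeas hbound N _).div_const _)).mul_const _)
          (.of_forall hpt)
    _ = (1 + (∫ ω, ‖S ω‖ ^ (2 * m) ∂P) / N ^ m) * N ^ (-(s / 2)) := by
        rw [integral_mul_const, integral_add (integrable_const 1)
          ((integrable_norm_sum_pow hmeas hbound N _).div_const _), integral_div]
        simp [S]
    _ ≤ (1 + momentConst B m) * N ^ (-(s / 2)) := by
        gcongr
        rwa [div_le_iff₀ (by positivity)]

/-- Let `H` be a real separable Hilbert space, `B > 0`, and `ξ_1, ξ_2, …` i.i.d.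
Bochner-integrable `H`-valued random elements with `E[ξ_j] = 0` and `‖ξ_j‖ ≤ B` a.s.
Then for every `s > 0` there is a constant `c`, depending only on `s` and `B`, such that
for every `N ≥ 1`, `E‖(1/N)∑_{j=1}^N ξ_j‖^s ≤ c N^{−s/2}`. -/
theorem statement6 (s B : ℝ) (hs : 0 < s) (hB : 0 < B) :
    ∃ c : ℝ, 0 < c ∧
      ∀ (H : Type*) [NormedAddCommGroup H] [InnerProductSpace ℝ H] [CompleteSpace H]
        [TopologicalSpace.SeparableSpace H] [MeasurableSpace H] [BorelSpace H]
        (Θ : Type*) [MeasurableSpace Θ] (P : Measure Θ) [IsProbabilityMeasure P]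
        (ξ : ℕ → Θ → H),
        (∀ j, Measurable (ξ j)) →
        iIndepFun ξ P →
        (∀ j, Measure.map (ξ j) P = Measure.map (ξ 0) P) →
        (∀ j, Integrable (ξ j) P) →
        (∀ j, ∫ ω, ξ j ω ∂P = 0) →
        (∀ j, ∀ᵐ ω ∂P, ‖ξ j ω‖ ≤ B) →
        ∀ N : ℕ, 1 ≤ N →
          ∫ ω, ‖(N : ℝ)⁻¹ • ∑ j ∈ Finset.range N, ξ j ω‖ ^ s ∂P ≤
            c * ((N : ℝ) ^ (-(s / 2)) : ℝ) :=
  statement6_general s B hs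
end

section
/- For every s ≥ 1 there exists a constant c, depending only on s, M, ε, δ and c⁽²⁾ (and not on N or t), such that for every N ≥ 1 and every t ∈ (ε, 1−ε), E[ | V_{(ℓ)} − E[V_{(ℓ)}] |^{2s} ] ≤ c N^{−s}. -/
/-!
If `G (y) ≥ t + h`, the event `y < V_(ℓ)` means that fewer than `ℓ ≈ N t` samples lie below `y`,
i.e. the empirical distribution function at `y` falls short of its mean by `N h`; Hoeffding's
inequality bounds its probability by `exp (-2 N h²)`, and symmetrically below the quantile. As
`G⁻¹` is `c⁽²⁾`-Lipschitz on `(δ, 1 - δ)`, `G` moves by at least `min (x / c⁽²⁾) ((ε - δ) / 2)`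
between `G⁻¹ t` and `G⁻¹ t ± x`; since every value lies in `[-M, M]`, this gives the tail bound
`P (|V_(ℓ) - G⁻¹ t| > x) ≤ 2 exp (-κ N x²)` with `κ` independent of `N` and `t`. The layer-cake
formula turns it into `E |V_(ℓ) - G⁻¹ t| ^ 2s ≤ C N ^ (-s)`, and Jensen's inequality moves the
centre from `G⁻¹ t` to `E V_(ℓ)` at the cost of a factor `2 ^ 2s`.
-/

open MeasureTheory ProbabilityTheory

noncomputable section

/-- The `ℓ`-th smallest value among `v 0, …, v (N−1)` (for `1 ≤ ℓ ≤ N`), defined as the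
empirical quantile `inf {x : #{j : v j ≤ x} ≥ ℓ}`. -/
def orderStat {N : ℕ} (v : Fin N → ℝ) (ℓ : ℕ) : ℝ :=
  sInf {x : ℝ | ℓ ≤ (Finset.univ.filter fun j => v j ≤ x).card}

open Real Set
open scoped Finset

theorem Real.rpow_add_le_mul_rpow_add_rpow {x y : ℝ} (hx : 0 ≤ x) (hy : 0 ≤ y) {p : ℝ}
    (hp : 1 ≤ p) : (x + y) ^ p ≤ 2 ^ (p - 1) * (x ^ p + y ^ p) := by
  exact_mod_cast NNReal.rpow_add_le_mul_rpow_add_rpow ⟨x, hx⟩ ⟨y, hy⟩ hp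

theorem le_apply_quantile_add_and_apply_quantile_sub_le {G Ginv : ℝ → ℝ} (hG : Monotone G)
    {δ ε L t x : ℝ} (hL : 0 < L) (hδε : δ < ε) (ht : t ∈ Ioo ε (1 - ε)) (hx : 0 ≤ x)
    (hGinv : ∀ u ∈ Ioo δ (1 - δ), G (Ginv u) = u)
    (hLip : ∀ u ∈ Ioo δ (1 - δ), |Ginv u - Ginv t| ≤ L * |u - t|) :
    t + min (x / L) ((ε - δ) / 2) ≤ G (Ginv t + x) ∧
      G (Ginv t - x) ≤ t - min (x / L) ((ε - δ) / 2) := by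
  set h := min (x / L) ((ε - δ) / 2)
  have hh : 0 ≤ h := le_min (by positivity) (by linarith)
  have hLh : L * h ≤ x := calc
    L * h ≤ L * (x / L) := by gcongr; exact min_le_left _ _
    _ = x := by field_simp
  have hmem : ∀ u, |u - t| = h → u ∈ Ioo δ (1 - δ) := fun u hu => by
    obtain ⟨hu₁, hu₂⟩ := abs_le.1 hu.le
    have : h ≤ (ε - δ) / 2 := min_le_right _ _
    exact ⟨by linarith [ht.1], by linarith [ht.2]⟩
  have hdist : ∀ u, |u - t| = h → |Ginv u - Ginv t| ≤ x := fun u hu =>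
    (hLip u (hmem u hu)).trans (hu ▸ hLh)
  have hplus : |t + h - t| = h := by rw [add_sub_cancel_left, abs_of_nonneg hh]
  have hminus : |t - h - t| = h := by rw [sub_sub_cancel_left, abs_neg, abs_of_nonneg hh]
  constructor
  · calc t + h = G (Ginv (t + h)) := (hGinv _ (hmem _ hplus)).symm
      _ ≤ G (Ginv t + x) := hG (by linarith [(abs_le.1 (hdist _ hplus)).2])
  · calc G (Ginv t - x) ≤ G (Ginv (t - h)) :=
          hG (by linarith [(abs_le.1 (hdist _ hminus)).1])
      _ = t - h := hGinv _ (hmem _ hminus)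

theorem ceil_mul_mem_Icc {N : ℕ} (hN : 0 < N) {t : ℝ} (ht : t ∈ Ioo 0 1) :
    ⌈(N : ℝ) * t⌉₊ ∈ Icc 1 N :=
  ⟨Nat.one_le_ceil_iff.2 (mul_pos (Nat.cast_pos.2 hN) ht.1),
    Nat.ceil_le.2 (mul_le_of_le_one_right (Nat.cast_nonneg N) ht.2.le)⟩

section OrderStat

variable {N : ℕ} (v : Fin N → ℝ) {ℓ : ℕ}

theorem exists_setOf_le_card_filter_eq_Ici (h1 : 1 ≤ ℓ) (hℓN : ℓ ≤ N) :
    ∃ j, {x : ℝ | ℓ ≤ #{i | v i ≤ x}} = Ici (v j) := by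
  have hmono : ∀ {x y : ℝ}, x ≤ y → ℓ ≤ #{i | v i ≤ x} → ℓ ≤ #{i | v i ≤ y} :=
    fun hxy hx => hx.trans <| Finset.card_le_card <|
      Finset.monotone_filter_right _ fun _ _ hi => hi.trans hxy
  -- the count does not change between `x` and the largest sample value below `x`
  have hdown : ∀ x, ℓ ≤ #{i | v i ≤ x} → ∃ k, v k ≤ x ∧ ℓ ≤ #{i | v i ≤ v k} := by
    intro x hx
    obtain ⟨k, hk, hmax⟩ := Finset.exists_max_image {i | v i ≤ x} v
      (Finset.card_pos.1 (by omega))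
    exact ⟨k, (Finset.mem_filter.1 hk).2, hx.trans <| Finset.card_le_card <|
      Finset.monotone_filter_right _ fun i _ hi => hmax i (by simpa using hi)⟩
  have : Nonempty (Fin N) := ⟨⟨0, by omega⟩⟩
  obtain ⟨k, -, hk⟩ := Finset.exists_max_image Finset.univ v Finset.univ_nonempty
  have hT : ({j | ℓ ≤ #{i | v i ≤ v j}} : Finset (Fin N)).Nonempty :=
    ⟨k, by simpa [Finset.filter_true_of_mem fun i _ => hk i (Finset.mem_univ i)] using hℓN⟩
  obtain ⟨j, hj, hmin⟩ := Finset.exists_min_image _ v hT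
  refine ⟨j, Set.ext fun x => ⟨fun hx => ?_, fun hx => hmono hx (Finset.mem_filter.1 hj).2⟩⟩
  obtain ⟨k, hkx, hk⟩ := hdown x hx
  exact (hmin k (by simpa using hk)).trans hkx

theorem orderStat_le_iff (h1 : 1 ≤ ℓ) (hℓN : ℓ ≤ N) (x : ℝ) :
    orderStat v ℓ ≤ x ↔ ℓ ≤ #{i | v i ≤ x} := by
  obtain ⟨j, hj⟩ := exists_setOf_le_card_filter_eq_Ici v h1 hℓN
  rw [orderStat, hj, csInf_Ici, ← mem_Ici, ← hj, mem_ofPred_eq]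

theorem exists_orderStat_eq (h1 : 1 ≤ ℓ) (hℓN : ℓ ≤ N) : ∃ j, orderStat v ℓ = v j := by
  obtain ⟨j, hj⟩ := exists_setOf_le_card_filter_eq_Ici v h1 hℓN
  exact ⟨j, by rw [orderStat, hj, csInf_Ici]⟩

theorem abs_orderStat_le (h1 : 1 ≤ ℓ) (hℓN : ℓ ≤ N) {M : ℝ} (hv : ∀ j, |v j| ≤ M) :
    |orderStat v ℓ| ≤ M := by
  obtain ⟨j, hj⟩ := exists_orderStat_eq v h1 hℓN
  exact hj ▸ hv j

end OrderStat

section Probability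

variable {Θ : Type*} [MeasurableSpace Θ] {P : Measure Θ}

theorem integral_abs_rpow_le_of_measureReal_lt_abs_le [IsFiniteMeasure P] {Y : Θ → ℝ}
    (hY : AEMeasurable Y P) {p C β : ℝ} (hp : 0 < p) (hC : 0 ≤ C) (hβ : 0 < β)
    (htail : ∀ x, 0 < x → P.real {ω | x < |Y ω|} ≤ C * exp (-β * x ^ 2)) :
    ∫ ω, |Y ω| ^ p ∂P ≤ C * Gamma (p / 2 + 1) * β ^ (-(p / 2)) := by
  have hint : IntegrableOn (fun x : ℝ => x ^ (p - 1) * exp (-β * x ^ 2)) (Ioi 0) :=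
    integrableOn_rpow_mul_exp_neg_mul_sq hβ (by linarith)
  have hgauss : ∫ x in Ioi 0, x ^ (p - 1) * exp (-β * x ^ 2) =
      β ^ (-(p / 2)) * (1 / 2) * Gamma (p / 2) := by
    simp_rw [← rpow_two]
    rw [integral_rpow_mul_exp_neg_mul_rpow two_pos (by linarith) hβ]
    ring_nf
  have hlayer : ∫⁻ ω, ENNReal.ofReal (|Y ω| ^ p) ∂P ≤
      ENNReal.ofReal (p * ∫ x in Ioi 0, C * (x ^ (p - 1) * exp (-β * x ^ 2))) := by
    rw [lintegral_rpow_eq_lintegral_meas_lt_mul P (ae_of_all _ fun ω => abs_nonneg _) hY.abs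
      hp, ENNReal.ofReal_mul hp.le, ofReal_integral_eq_lintegral_ofReal (hint.const_mul C)
        ((ae_restrict_mem measurableSet_Ioi).mono fun x hx =>
          mul_nonneg hC (mul_nonneg (rpow_nonneg (le_of_lt hx) _) (exp_pos _).le))]
    gcongr ENNReal.ofReal p * ?_
    refine setLIntegral_mono' measurableSet_Ioi fun x (hx : 0 < x) => ?_
    rw [mul_left_comm, ENNReal.ofReal_mul (rpow_nonneg hx.le _), mul_comm]
    gcongr
    rw [← ofReal_measureReal]
    exact ENNReal.ofReal_le_ofReal (htail x hx)
  rw [integral_eq_lintegral_of_nonneg_ae (ae_of_all _ fun ω => by positivity)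
    (hY.abs.pow_const p).aestronglyMeasurable]
  refine ENNReal.toReal_le_of_le_ofReal (by positivity) (hlayer.trans_eq ?_)
  rw [integral_const_mul, hgauss, Real.Gamma_add_one (by positivity)]
  ring_nf

theorem integral_abs_sub_integral_rpow_le [IsProbabilityMeasure P] {Y : Θ → ℝ}
    (hY : Integrable Y P) {p : ℝ} (hp : 1 ≤ p) (a : ℝ)
    (hYa : Integrable (fun ω => |Y ω - a| ^ p) P) :
    ∫ ω, |Y ω - ∫ ω', Y ω' ∂P| ^ p ∂P ≤ 2 ^ p * ∫ ω, |Y ω - a| ^ p ∂P := by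
  set m := ∫ ω, Y ω ∂P
  have hjensen : |m - a| ^ p ≤ ∫ ω, |Y ω - a| ^ p ∂P := by
    have hma : |m - a| ≤ ∫ ω, |Y ω - a| ∂P := by
      rw [show m - a = ∫ ω, (Y ω - a) ∂P by simp [integral_sub hY (integrable_const a), m]]
      exact abs_integral_le_integral_abs
    calc |m - a| ^ p ≤ (∫ ω, |Y ω - a| ∂P) ^ p := by gcongr
      _ ≤ ∫ ω, |Y ω - a| ^ p ∂P :=
        (convexOn_rpow hp).map_integral_le
          (continuousOn_id.rpow_const fun _ _ => Or.inr (by linarith)) isClosed_Ici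
          (ae_of_all _ fun ω => mem_Ici.2 (abs_nonneg _)) (hY.sub (integrable_const a)).abs hYa
  have hpt : ∀ ω, |Y ω - m| ^ p ≤ 2 ^ (p - 1) * (|Y ω - a| ^ p + |m - a| ^ p) := fun ω =>
    calc |Y ω - m| ^ p ≤ (|Y ω - a| + |m - a|) ^ p := by
          gcongr
          exact abs_sub_comm m a ▸ abs_sub_le _ _ _
      _ ≤ _ := Real.rpow_add_le_mul_rpow_add_rpow (abs_nonneg _) (abs_nonneg _) hp
  calc ∫ ω, |Y ω - m| ^ p ∂P
      ≤ ∫ ω, 2 ^ (p - 1) * (|Y ω - a| ^ p + |m - a| ^ p) ∂P :=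
        integral_mono_of_nonneg (ae_of_all _ fun ω => by positivity)
          ((hYa.add (integrable_const _)).const_mul _) (ae_of_all _ hpt)
    _ = 2 ^ (p - 1) * (∫ ω, |Y ω - a| ^ p ∂P + |m - a| ^ p) := by
        rw [integral_const_mul, integral_add hYa (integrable_const _)]
        simp
    _ ≤ 2 ^ (p - 1) * (2 * ∫ ω, |Y ω - a| ^ p ∂P) := by gcongr; linarith
    _ = 2 ^ p * ∫ ω, |Y ω - a| ^ p ∂P := by
        rw [rpow_sub_one two_ne_zero]
        ring

theorem integral_abs_sub_integral_rpow_le_of_measureReal_lt_abs_sub_le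
    [IsProbabilityMeasure P] {Y : Θ → ℝ} (hY : Measurable Y) {a R C β p : ℝ} (hp : 1 ≤ p)
    (hC : 0 ≤ C) (hβ : 0 < β)
    (hbd : ∀ᵐ ω ∂P, |Y ω - a| ≤ R)
    (htail : ∀ x, 0 < x → P.real {ω | x < |Y ω - a|} ≤ C * exp (-β * x ^ 2)) :
    ∫ ω, |Y ω - ∫ ω', Y ω' ∂P| ^ p ∂P ≤ 2 ^ p * (C * Gamma (p / 2 + 1) * β ^ (-(p / 2))) := by
  have hYi : Integrable Y P := .of_bound hY.aestronglyMeasurable (|a| + R) <| by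
    filter_upwards [hbd] with ω hω
    linarith [norm_eq_abs (Y ω), abs_sub_abs_le_abs_sub (Y ω) a]
  have hYai : Integrable (fun ω => |Y ω - a| ^ p) P :=
    .of_bound ((hY.sub_const a).abs.pow_const p).aestronglyMeasurable (R ^ p) <| by
      filter_upwards [hbd] with ω hω
      rw [norm_eq_abs, abs_of_nonneg (by positivity)]
      exact rpow_le_rpow (abs_nonneg _) hω (by linarith)
  refine (integral_abs_sub_integral_rpow_le hYi hp a hYai).trans ?_
  gcongr
  exact integral_abs_rpow_le_of_measureReal_lt_abs_le (hY.sub_const a).aemeasurable (by linarith)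
    hC hβ htail

theorem measureReal_lt_abs_le_of_le_min {Y : Θ → ℝ} {R C β L η : ℝ}
    (hR : 0 < R) (hC : 0 ≤ C) (hβ : 0 ≤ β) (hL : 0 < L) (hη : 0 ≤ η)
    (hbd : ∀ᵐ ω ∂P, |Y ω| ≤ R)
    (htail : ∀ x, 0 < x → P.real {ω | x < |Y ω|} ≤ C * exp (-β * min (x / L) η ^ 2))
    {x : ℝ} (hx : 0 < x) :
    P.real {ω | x < |Y ω|} ≤ C * exp (-(β * min (1 / L) (η / R) ^ 2) * x ^ 2) := by
  rcases le_or_gt x R with hxR | hRx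
  · have hmin : min (1 / L) (η / R) * x ≤ min (x / L) η := le_min
      (calc min (1 / L) (η / R) * x ≤ 1 / L * x := by gcongr; exact min_le_left _ _
        _ = x / L := by ring)
      (calc min (1 / L) (η / R) * x ≤ η / R * R := by gcongr; exact min_le_right _ _
        _ = η := by field_simp)
    have hsq := pow_le_pow_left₀ (by positivity) hmin 2
    refine (htail x hx).trans (mul_le_mul_of_nonneg_left (exp_le_exp.2 ?_) hC)
    nlinarith [mul_le_mul_of_nonneg_left hsq hβ]
  · rw [measureReal_def, measure_eq_zero_iff_ae_notMem.2, ENNReal.toReal_zero]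
    · positivity
    filter_upwards [hbd] with ω hω hlt
    exact absurd (hRx.trans hlt) hω.not_gt

theorem abs_le_of_measureReal_le_mem_Ioo [IsProbabilityMeasure P] {Y : Θ → ℝ}
    (hYm : Measurable Y) {M y : ℝ} (hY : ∀ᵐ ω ∂P, |Y ω| ≤ M)
    (hy : P.real {ω | Y ω ≤ y} ∈ Ioo 0 1) : |y| ≤ M := by
  refine abs_le.2 ⟨not_lt.1 fun hyM => hy.1.ne' ?_, not_lt.1 fun hyM => hy.2.ne ?_⟩
  · rw [measureReal_def, measure_eq_zero_iff_ae_notMem.2, ENNReal.toReal_zero]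
    filter_upwards [hY] with ω hω hle
    linarith [neg_abs_le (Y ω)]
  · rw [measureReal_def, (ae_iff_measure_eq
      (measurableSet_le hYm measurable_const).nullMeasurableSet).1, measure_univ,
      ENNReal.toReal_one]
    filter_upwards [hY] with ω hω
    linarith [le_abs_self (Y ω)]

theorem measureReal_le_card_filter_mem_le [IsProbabilityMeasure P] {ι : Type*} [Fintype ι]
    {V : ι → Θ → ℝ} (hV : ∀ j, Measurable (V j)) (hind : iIndepFun V P) {S : Set ℝ}
    [DecidablePred (· ∈ S)] (hS : MeasurableSet S) {p h : ℝ}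
    (hp : ∀ j, P.real (V j ⁻¹' S) = p) (hh : 0 ≤ h) :
    P.real {ω | Fintype.card ι * (p + h) ≤ #{j | V j ω ∈ S}} ≤
      exp (-2 * Fintype.card ι * h ^ 2) := by
  set n := (Fintype.card ι : ℝ)
  have hmean : ∀ j, P[S.indicator 1 ∘ V j] = p := fun j => by
    rw [← hp j, ← integral_indicator_one ((hV j) hS)]
    rfl
  have hsubG : ∀ j ∈ Finset.univ, HasSubgaussianMGF (fun ω => S.indicator 1 (V j ω) - p)
      ((‖(1 : ℝ) - 0‖₊ / 2) ^ 2) P := fun j _ => by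
    rw [← hmean j]
    refine hasSubgaussianMGF_of_mem_Icc
      ((measurable_one.indicator hS).comp (hV j)).aemeasurable (ae_of_all _ fun ω => ?_)
    by_cases h : V j ω ∈ S <;> simp [Set.indicator, h]
  have hindep : iIndepFun (fun j ω => S.indicator 1 (V j ω) - p) P :=
    hind.comp (fun _ y => S.indicator 1 y - p) fun _ => (measurable_one.indicator hS).sub_const p
  have hcount : ∀ ω, ∑ j, (S.indicator 1 (V j ω) - p) = #{j | V j ω ∈ S} - n * p :=
    fun ω => by simp [Finset.sum_sub_distrib, Set.indicator_apply, Finset.sum_boole, n]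
  have := HasSubgaussianMGF.measure_sum_ge_le_of_iIndepFun hindep hsubG (ε := n * h)
    (by positivity)
  convert this using 2
  · ext ω
    simp only [mem_ofPred_eq, hcount]
    constructor <;> intro h <;> linarith
  · rcases eq_or_ne n 0 with hn | hn
    · simp [hn]
    · simp [n] at hn ⊢
      field_simp

theorem measurable_orderStat {N ℓ : ℕ} (h1 : 1 ≤ ℓ) (hℓN : ℓ ≤ N) {V : Fin N → Θ → ℝ}
    (hV : ∀ j, Measurable (V j)) : Measurable fun ω => orderStat (fun j => V j ω) ℓ := by
  refine measurable_of_Iic fun x => ?_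
  simp only [preimage, mem_Iic, orderStat_le_iff _ h1 hℓN, Finset.card_filter]
  exact measurableSet_le measurable_const <| Finset.measurable_sum _ fun i _ =>
    Measurable.ite (measurableSet_le (hV i) measurable_const) measurable_const measurable_const

section Quantile

variable [IsProbabilityMeasure P] {N ℓ : ℕ} {V : Fin N → Θ → ℝ} {F : ℝ → ℝ} {t h : ℝ}

theorem measureReal_lt_orderStat_le (hV : ∀ j, Measurable (V j)) (hind : iIndepFun V P)
    (hF : ∀ j y, P.real {ω | V j ω ≤ y} = F y) (h1 : 1 ≤ ℓ) (hℓN : ℓ ≤ N) {y : ℝ}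
    (hℓt : (ℓ : ℝ) - 1 < N * t) (hh : 0 ≤ h) (hgap : t + h ≤ F y) :
    P.real {ω | y < orderStat (fun j => V j ω) ℓ} ≤ exp (-2 * N * h ^ 2) := by
  have hp : ∀ j, P.real (V j ⁻¹' Ioi y) = 1 - F y := fun j => by
    rw [← hF j y, ← probReal_compl_eq_one_sub (measurableSet_le (hV j) measurable_const)]
    congr 1
    ext ω
    simp
  have hcard := measureReal_le_card_filter_mem_le hV hind measurableSet_Ioi hp hh
  rw [Fintype.card_fin] at hcard
  refine (measureReal_mono fun ω (hω : y < _) => ?_).trans hcard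
  have hlt : #{j | V j ω ≤ y} < ℓ :=
    not_le.1 fun hle => not_le.2 hω ((orderStat_le_iff _ h1 hℓN y).2 hle)
  have hsplit : #{j | V j ω ∈ Ioi y} + #{j | V j ω ≤ y} = N := by
    rw [add_comm]
    simpa [Set.mem_Ioi, ← not_le] using
      Finset.card_filter_add_card_filter_not (s := Finset.univ) (fun j => V j ω ≤ y)
  have hgapN := mul_le_mul_of_nonneg_left hgap (Nat.cast_nonneg N)
  simp only [mem_ofPred_eq]
  have : (#{j | V j ω ≤ y} : ℝ) + 1 ≤ ℓ := by exact_mod_cast hlt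
  have : (#{j | V j ω ∈ Ioi y} : ℝ) + #{j | V j ω ≤ y} = N := by exact_mod_cast hsplit
  nlinarith

theorem measureReal_orderStat_lt_le (hV : ∀ j, Measurable (V j)) (hind : iIndepFun V P)
    (hF : ∀ j y, P.real {ω | V j ω ≤ y} = F y) (h1 : 1 ≤ ℓ) (hℓN : ℓ ≤ N) {y : ℝ}
    (htℓ : N * t ≤ ℓ) (hh : 0 ≤ h) (hgap : F y ≤ t - h) :
    P.real {ω | orderStat (fun j => V j ω) ℓ < y} ≤ exp (-2 * N * h ^ 2) := by
  have hcard := measureReal_le_card_filter_mem_le hV hind measurableSet_Iic (hF · y) hh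
  rw [Fintype.card_fin] at hcard
  refine (measureReal_mono fun ω (hω : _ < y) => ?_).trans hcard
  have hle : ℓ ≤ #{j | V j ω ≤ y} := (orderStat_le_iff _ h1 hℓN y).1 hω.le
  have hgapN := mul_le_mul_of_nonneg_left hgap (Nat.cast_nonneg N)
  simp only [mem_ofPred_eq, mem_Iic]
  have : (ℓ : ℝ) ≤ #{j | V j ω ≤ y} := by exact_mod_cast hle
  nlinarith

theorem measureReal_lt_abs_orderStat_sub_le (hV : ∀ j, Measurable (V j))
    (hind : iIndepFun V P) (hF : ∀ j y, P.real {ω | V j ω ≤ y} = F y) (h1 : 1 ≤ ℓ)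
    (hℓN : ℓ ≤ N) (hℓt : (ℓ : ℝ) - 1 < N * t) (htℓ : N * t ≤ ℓ) (hh : 0 ≤ h) {q x : ℝ}
    (hup : t + h ≤ F (q + x)) (hlow : F (q - x) ≤ t - h) :
    P.real {ω | x < |orderStat (fun j => V j ω) ℓ - q|} ≤ 2 * exp (-2 * N * h ^ 2) :=
  calc P.real {ω | x < |orderStat (fun j => V j ω) ℓ - q|}
      ≤ P.real ({ω | q + x < orderStat (fun j => V j ω) ℓ} ∪
          {ω | orderStat (fun j => V j ω) ℓ < q - x}) :=
        measureReal_mono fun ω (hω : x < |_|) => by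
          rcases lt_abs.1 hω with hlt | hlt
          · exact Or.inl (by simp only [mem_ofPred_eq]; linarith)
          · exact Or.inr (by simp only [mem_ofPred_eq]; linarith)
    _ ≤ exp (-2 * N * h ^ 2) + exp (-2 * N * h ^ 2) :=
        (measureReal_union_le _ _).trans <| add_le_add
          (measureReal_lt_orderStat_le hV hind hF h1 hℓN hℓt hh hup)
          (measureReal_orderStat_lt_le hV hind hF h1 hℓN htℓ hh hlow)
    _ = 2 * exp (-2 * N * h ^ 2) := by ring

theorem measureReal_lt_abs_orderStat_sub_quantile_le (hV : ∀ j, Measurable (V j))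
    (hind : iIndepFun V P) (hF : ∀ j y, P.real {ω | V j ω ≤ y} = F y) (hN : 0 < N)
    {Finv : ℝ → ℝ} {δ ε L x : ℝ} (hδ : 0 ≤ δ) (hδε : δ < ε) (hL : 0 < L)
    (ht : t ∈ Ioo ε (1 - ε)) (hx : 0 < x) (hFinv : ∀ u ∈ Ioo δ (1 - δ), F (Finv u) = u)
    (hLip : ∀ u ∈ Ioo δ (1 - δ), |Finv u - Finv t| ≤ L * |u - t|) :
    P.real {ω | x < |orderStat (fun j => V j ω) ⌈(N : ℝ) * t⌉₊ - Finv t|} ≤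
      2 * exp (-(2 * N) * min (x / L) ((ε - δ) / 2) ^ 2) := by
  have hFmono : Monotone F := fun y y' hyy' => by
    rw [← hF ⟨0, hN⟩ y, ← hF ⟨0, hN⟩ y']
    exact measureReal_mono fun ω (hω : _ ≤ y) => hω.trans hyy'
  obtain ⟨hup, hlow⟩ :=
    le_apply_quantile_add_and_apply_quantile_sub_le hFmono hL hδε ht hx.le hFinv hLip
  have ht01 : t ∈ Ioo 0 1 := ⟨by linarith [ht.1], by linarith [ht.2]⟩
  obtain ⟨h1, hℓN⟩ := ceil_mul_mem_Icc hN ht01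
  rw [← neg_mul]
  refine measureReal_lt_abs_orderStat_sub_le hV hind hF h1 hℓN ?_ (Nat.le_ceil _)
    (le_min (by positivity) (by linarith)) hup hlow
  linarith [Nat.ceil_lt_add_one (mul_pos (Nat.cast_pos.2 hN) ht01.1).le]

end Quantile

end Probability

theorem statement10_general (s M ε δ c2 : ℝ) (hs : 1 ≤ s) (hM : 0 < M) (hδ : 0 ≤ δ)
    (hδε : δ < ε) :
    ∃ c : ℝ, 0 < c ∧
      ∀ (N : ℕ) (hN : 0 < N), ∀ t ∈ Set.Ioo ε (1 - ε),
      ∀ (Θ : Type*) [MeasurableSpace Θ] (P : Measure Θ) [IsProbabilityMeasure P]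
        (V : Fin N → Θ → ℝ),
        (∀ j, Measurable (V j)) →
        iIndepFun V P →
        (∀ j j', Measure.map (V j) P = Measure.map (V j') P) →
        (∀ j, ∀ᵐ ω ∂P, |V j ω| ≤ M) →
        ∀ (G Ginv : ℝ → ℝ) (a b : ℝ), a < b →
          (∀ x, G x = (P {ω | V ⟨0, hN⟩ ω ≤ x}).toReal) →
          Set.BijOn G (Set.Ioo a b) (Set.Ioo 0 1) →
          (∀ x ∈ Set.Ioo a b, Ginv (G x) = x) →
          (∀ u ∈ Set.Ioo (0 : ℝ) 1, Ginv u ∈ Set.Ioo a b ∧ G (Ginv u) = u) →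
          (∀ u ∈ Set.Ioo δ (1 - δ),
            DifferentiableAt ℝ Ginv u ∧ DifferentiableAt ℝ (deriv Ginv) u ∧
            |deriv Ginv u| ≤ c2 ∧ |deriv (deriv Ginv) u| ≤ c2) →
          ∫ ω, |orderStat (fun j => V j ω) ⌈(N : ℝ) * t⌉₊ -
              ∫ ω', orderStat (fun j => V j ω') ⌈(N : ℝ) * t⌉₊ ∂P|
            ^ (2 * s) ∂P ≤ c * (N : ℝ) ^ (-s) := by
  set L := max c2 1
  set κ := min (1 / L) ((ε - δ) / 2 / (2 * M))
  have hL : 0 < L := lt_max_of_lt_right one_pos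
  have hκ : 0 < κ := lt_min (by positivity) (div_pos (by linarith) (by positivity))
  refine ⟨2 ^ (2 * s) * (2 * Gamma (s + 1) * (2 * κ ^ 2) ^ (-s)), by positivity, ?_⟩
  intro N hN t ht Θ _ P _ V hV hind hVid hVbd G Ginv a b _ hG _ _ hGinv hder
  have hF : ∀ j y, P.real {ω | V j ω ≤ y} = G y := fun j y => by
    rw [hG, measureReal_def]
    exact congrArg ENNReal.toReal <| IdentDistrib.measure_mem_eq
      ⟨(hV j).aemeasurable, (hV _).aemeasurable, hVid j _⟩ measurableSet_Iic
  have hLip : ∀ u ∈ Ioo δ (1 - δ), |Ginv u - Ginv t| ≤ L * |u - t| := fun u hu => by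
    simpa only [norm_eq_abs] using (convex_Ioo δ (1 - δ)).norm_image_sub_le_of_norm_deriv_le
      (fun x hx => (hder x hx).1) (fun x hx => (hder x hx).2.2.1.trans (le_max_left _ _))
      ⟨by linarith [ht.1], by linarith [ht.2]⟩ hu
  have ht01 : t ∈ Ioo 0 1 := ⟨by linarith [ht.1], by linarith [ht.2]⟩
  obtain ⟨h1, hℓN⟩ := ceil_mul_mem_Icc hN ht01
  set X := fun ω => orderStat (fun j => V j ω) ⌈(N : ℝ) * t⌉₊
  have hq : |Ginv t| ≤ M := abs_le_of_measureReal_le_mem_Ioo (hV ⟨0, hN⟩) (hVbd _) <| by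
    rw [hF, (hGinv t ht01).2]
    exact ht01
  have hbd : ∀ᵐ ω ∂P, |X ω - Ginv t| ≤ 2 * M := by
    filter_upwards [ae_all_iff.2 hVbd] with ω hω
    linarith [abs_sub (X ω) (Ginv t), abs_orderStat_le _ h1 hℓN hω]
  have htail : ∀ x, 0 < x → P.real {ω | x < |X ω - Ginv t|} ≤
      2 * exp (-(2 * N) * min (x / L) ((ε - δ) / 2) ^ 2) := fun x hx =>
    measureReal_lt_abs_orderStat_sub_quantile_le hV hind hF hN hδ hδε hL ht hx
      (fun u hu => (hGinv u ⟨by linarith [hu.1], by linarith [hu.2]⟩).2) hLip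
  refine (integral_abs_sub_integral_rpow_le_of_measureReal_lt_abs_sub_le (p := 2 * s)
    (β := 2 * N * κ ^ 2) (measurable_orderStat h1 hℓN hV) (by linarith) zero_le_two
    (by positivity) hbd fun x hx => measureReal_lt_abs_le_of_le_min (by positivity) zero_le_two
      (by positivity) hL (by linarith) hbd htail hx).trans_eq ?_
  rw [mul_div_cancel_left₀ s two_ne_zero, mul_right_comm 2 (N : ℝ),
    mul_rpow (by positivity) (by positivity)]
  ring

/-- **Lemma (central moments of the empirical quantile).**
In the setting of the bias lemma, for every `s ≥ 1` there is a constant `c`, depending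
only on `s, M, ε, δ, c⁽²⁾` (not on `N` or `t`), such that for every `N ≥ 1` and
`t ∈ (ε, 1−ε)`, with `ℓ = ⌈Nt⌉`, `E|V_{(ℓ)} − E[V_{(ℓ)}]|^{2s} ≤ c N^{−s}`. -/
theorem statement10 (s M ε δ c2 : ℝ) (hs : 1 ≤ s) (hM : 0 < M) (hδ : 0 ≤ δ)
    (hδε : δ < ε) (hε : ε < 1 / 2) :
    ∃ c : ℝ, 0 < c ∧
      ∀ (N : ℕ) (hN : 0 < N), ∀ t ∈ Set.Ioo ε (1 - ε),
      ∀ (Θ : Type*) [MeasurableSpace Θ] (P : Measure Θ) [IsProbabilityMeasure P]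
        (V : Fin N → Θ → ℝ),
        (∀ j, Measurable (V j)) →
        iIndepFun V P →
        (∀ j j', Measure.map (V j) P = Measure.map (V j') P) →
        (∀ j, ∀ᵐ ω ∂P, |V j ω| ≤ M) →
        ∀ (G Ginv : ℝ → ℝ) (a b : ℝ), a < b →
          (∀ x, G x = (P {ω | V ⟨0, hN⟩ ω ≤ x}).toReal) →
          Set.BijOn G (Set.Ioo a b) (Set.Ioo 0 1) →
          (∀ x ∈ Set.Ioo a b, Ginv (G x) = x) →
          (∀ u ∈ Set.Ioo (0 : ℝ) 1, Ginv u ∈ Set.Ioo a b ∧ G (Ginv u) = u) →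
          (∀ u ∈ Set.Ioo δ (1 - δ),
            DifferentiableAt ℝ Ginv u ∧ DifferentiableAt ℝ (deriv Ginv) u ∧
            |deriv Ginv u| ≤ c2 ∧ |deriv (deriv Ginv) u| ≤ c2) →
          ∫ ω, |orderStat (fun j => V j ω) ⌈(N : ℝ) * t⌉₊ -
              ∫ ω', orderStat (fun j => V j ω') ⌈(N : ℝ) * t⌉₊ ∂P|
            ^ (2 * s) ∂P ≤ c * (N : ℝ) ^ (-s) :=
  statement10_general s M ε δ c2 hs hM hδ hδε
end
end

section
/- Let b and c be real numbers with b > 1 and 1 < c ≤ 2, and define a = max( (b + bc/2)/(bc+1), (2b − 1)/(bc+1), (4b − bc − 2)/(bc+1) ) if b(1 − c/2) ≤ 3/4, and a = max( (b + bc/2)/(bc+1), (2b − 1/2)/(bc+1) ) if b(1 − c/2) > 3/4. Then a < b(c+1)/(bc+1). -/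
theorem statement13_general (b c : ℝ) (hb : 1 < b) (hc1 : 1 < c) :
    (if b * (1 - c / 2) ≤ 3 / 4 then
        max (max ((b + b * c / 2) / (b * c + 1)) ((2 * b - 1) / (b * c + 1)))
          ((4 * b - b * c - 2) / (b * c + 1))
      else
        max ((b + b * c / 2) / (b * c + 1)) ((2 * b - 1 / 2) / (b * c + 1)))
      < b * (c + 1) / (b * c + 1) := by
  have hbc : b < b * c := lt_mul_of_one_lt_right (by linarith) hc1
  have hd : 0 < b * c + 1 := by linarith
  -- Over the common denominator, the third numerator needs the case hypothesis:
  -- `(4b - bc - 2) - (b + bc) ≤ 3 (b - bc/2) - 2 - bc/2 ≤ 1/4 - bc/2 < 0`.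
  split_ifs <;> repeat' apply max_lt
  all_goals
    gcongr
    linarith

/-- For `b > 1` and `1 < c ≤ 2`, the exponent `a` of the paper's minimax theorem
(defined piecewise according to whether `b(1 − c/2) ≤ 3/4`) is strictly smaller than the
exponent `b(c+1)/(bc+1)` required in earlier state-of-the-art results. -/
theorem statement13 (b c : ℝ) (hb : 1 < b) (hc1 : 1 < c) (hc2 : c ≤ 2) :
    (if b * (1 - c / 2) ≤ 3 / 4 then
        max (max ((b + b * c / 2) / (b * c + 1)) ((2 * b - 1) / (b * c + 1)))
          ((4 * b - b * c - 2) / (b * c + 1))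
      else
        max ((b + b * c / 2) / (b * c + 1)) ((2 * b - 1 / 2) / (b * c + 1)))
      < b * (c + 1) / (b * c + 1) :=
  statement13_general b c hb hc1
end
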